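/- Let G be a group and D(G) the inductive family: S ∈ D(G) if S ∩ S⁻¹ ≠ ∅, closed under T ∪ {a}, T ∪ {b} ∈ D(G) ⟹ T ∪ {a*b} ∈ D(G). If S ⊆ G satisfies S ∉ D(G) and {a} ∉ D(G) for every a ∈ G \ {e}, then there is a right order of G whose positive cone contains S, i.e. a subsemigroup P ⊇ S with e ∉ P and P ∪ P⁻¹ = G \ {e}. -/

import Mathlib

/-!
Extend `S` by Zorn's lemma to a maximal set `M ∉ D(G)`; `D(G)` is of finite character, so such
an `M` exists, and the defining rule of `D(G)` makes the complement of `M` a submonoid `C`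
with `C ∪ C⁻¹ = G` that avoids `S`. A second application of Zorn's lemma gives a minimal such
`C`. Its units `C ∩ C⁻¹` lie in every submonoid `D` with `D ∪ D⁻¹ = G`, since otherwise `C`
could be shrunk by cutting its units down to `D`. By hypothesis every `a ≠ 1` is avoided by
some such `D`, so `C ∩ C⁻¹ = {1}` and `P = Cᶜ` is the required positive cone.
-/

/-- The inductive family `D(G)` of subsets of a group `G`: a set is in `D(G)` if it meets
its own set of inverses, and the family is closed under the rule
`T ∪ {a}, T ∪ {b} ∈ D(G) ⟹ T ∪ {a*b} ∈ D(G)`. -/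
inductive RightD {G : Type*} [Group G] : Set G → Prop
  | base (S : Set G) (a : G) (ha : a ∈ S) (hinv : a⁻¹ ∈ S) : RightD S
  | step (T : Set G) (a b : G) (h1 : RightD (T ∪ {a})) (h2 : RightD (T ∪ {b})) :
      RightD (T ∪ {a * b})

section

variable {G : Type*} [Group G]

namespace RightD

theorem mono {S T : Set G} (h : RightD S) (hST : S ⊆ T) : RightD T := by
  induction h generalizing T with
  | base S a ha hinv => exact base T a (hST ha) (hST hinv)
  | step U a b _ _ ih₁ ih₂ =>
    have hU : U ⊆ T := Set.subset_union_left.trans hST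
    have hab : a * b ∈ T := hST (Set.mem_union_right _ rfl)
    rw [← Set.union_eq_self_of_subset_right (Set.singleton_subset_iff.mpr hab)]
    exact step T a b (ih₁ (Set.union_subset_union_left _ hU))
      (ih₂ (Set.union_subset_union_left _ hU))

theorem exists_finite_subset {S : Set G} (h : RightD S) :
    ∃ F ⊆ S, F.Finite ∧ RightD F := by
  induction h with
  | base S a ha hinv =>
    exact ⟨{a, a⁻¹}, Set.insert_subset ha (Set.singleton_subset_iff.mpr hinv),
      Set.toFinite _, base _ a (by simp) (by simp)⟩
  | step T a b _ _ ih₁ ih₂ =>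
    obtain ⟨F₁, hF₁T, hF₁, hD₁⟩ := ih₁
    obtain ⟨F₂, hF₂T, hF₂, hD₂⟩ := ih₂
    have hU : F₁ \ {a} ∪ F₂ \ {b} ⊆ T := by
      rw [Set.union_singleton] at hF₁T hF₂T
      exact Set.union_subset (Set.sdiff_singleton_subset_iff.mpr hF₁T)
        (Set.sdiff_singleton_subset_iff.mpr hF₂T)
    refine ⟨F₁ \ {a} ∪ F₂ \ {b} ∪ {a * b}, Set.union_subset_union_left _ hU,
      ((hF₁.sdiff).union hF₂.sdiff).union (Set.finite_singleton _),
      step _ a b (hD₁.mono ?_) (hD₂.mono ?_)⟩ <;>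
    · intro x hx
      by_cases hxa : x = a <;> by_cases hxb : x = b <;> simp_all

theorem isOfFiniteCharacter_not : Order.IsOfFiniteCharacter {T : Set G | ¬ RightD T} :=
  fun _ => ⟨fun hT _ hFT _ hF => hT (hF.mono hFT), fun hfin hT =>
    let ⟨F, hFT, hF, hD⟩ := hT.exists_finite_subset
    hfin F hFT hF hD⟩

end RightD

structure IsTotalSubmonoid (C : Set G) : Prop where
  one_mem : (1 : G) ∈ C
  mul_mem : ∀ {x y : G}, x ∈ C → y ∈ C → x * y ∈ C
  mem_or_inv_mem : ∀ g : G, g ∈ C ∨ g⁻¹ ∈ C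

theorem isTotalSubmonoid_compl_of_maximal {M : Set G} (hM : Maximal (fun T => ¬ RightD T) M) :
    IsTotalSubmonoid Mᶜ := by
  have hinsert : ∀ x ∉ M, RightD (M ∪ {x}) := fun x hx => by
    by_contra hD
    exact hx (hM.2 hD Set.subset_union_left (Set.mem_union_right _ rfl))
  refine ⟨fun h1 => hM.1 (.base M 1 h1 (by simpa using h1)), fun {x y} hx hy hxy => ?_,
    fun g => ?_⟩
  · have := RightD.step M x y (hinsert x hx) (hinsert y hy)
    rw [Set.union_eq_self_of_subset_right (Set.singleton_subset_iff.mpr hxy)] at this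
    exact hM.1 this
  · by_contra! h
    exact hM.1 (.base M g (not_not.mp h.1) (not_not.mp h.2))

theorem exists_isTotalSubmonoid_disjoint {S : Set G} (hS : ¬ RightD S) :
    ∃ C, IsTotalSubmonoid C ∧ Disjoint S C := by
  obtain ⟨M, hSM, hM⟩ := RightD.isOfFiniteCharacter_not.exists_maximal (x := S) hS
  exact ⟨Mᶜ, isTotalSubmonoid_compl_of_maximal hM, Set.disjoint_compl_right_iff_subset.mpr hSM⟩

theorem IsTotalSubmonoid.sInter {c : Set (Set G)} (hc : IsChain (· ⊆ ·) c)
    (h : ∀ C ∈ c, IsTotalSubmonoid C) : IsTotalSubmonoid (⋂₀ c) where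
  one_mem := Set.mem_sInter.mpr fun C hC => (h C hC).one_mem
  mul_mem hx hy := Set.mem_sInter.mpr fun C hC =>
    (h C hC).mul_mem (Set.mem_sInter.mp hx C hC) (Set.mem_sInter.mp hy C hC)
  mem_or_inv_mem g := by
    by_contra! hg
    simp only [Set.mem_sInter, not_forall] at hg
    obtain ⟨⟨A, hA, hgA⟩, ⟨B, hB, hgB⟩⟩ := hg
    rcases hc.total hA hB with hAB | hBA
    · exact ((h A hA).mem_or_inv_mem g).elim hgA fun h' => hgB (hAB h')
    · exact ((h B hB).mem_or_inv_mem g).elim (fun h' => hgA (hBA h')) hgB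

theorem exists_minimal_isTotalSubmonoid_disjoint {S : Set G} (hS : ¬ RightD S) :
    ∃ C, Minimal (fun C => IsTotalSubmonoid C ∧ Disjoint S C) C := by
  obtain ⟨C₀, hC₀⟩ := exists_isTotalSubmonoid_disjoint hS
  obtain ⟨C, -, hC⟩ := zorn_superset_nonempty {C | IsTotalSubmonoid C ∧ Disjoint S C}
    (fun c hcS hc ⟨C, hCc⟩ => ⟨⋂₀ c, ⟨.sInter hc fun C hC => (hcS hC).1,
      (hcS hCc).2.mono_right (Set.sInter_subset_of_mem hCc)⟩,
      fun _ => Set.sInter_subset_of_mem⟩) C₀ hC₀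
  exact ⟨C, hC⟩

theorem IsTotalSubmonoid.refine {C D : Set G} (hC : IsTotalSubmonoid C)
    (hD : IsTotalSubmonoid D) : IsTotalSubmonoid {g | g ∈ C ∧ (g⁻¹ ∈ C → g ∈ D)} where
  one_mem := ⟨hC.one_mem, fun _ => hD.one_mem⟩
  mul_mem := by
    rintro x y ⟨hx, hxD⟩ ⟨hy, hyD⟩
    refine ⟨hC.mul_mem hx hy, fun hxy => hD.mul_mem (hxD ?_) (hyD ?_)⟩
    · simpa [mul_assoc] using hC.mul_mem hy hxy
    · simpa [mul_assoc] using hC.mul_mem hxy hx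
  mem_or_inv_mem g := by
    by_cases hg : g ∈ C
    · by_cases hg' : g⁻¹ ∈ C
      · exact (hD.mem_or_inv_mem g).imp (fun hgD => ⟨hg, fun _ => hgD⟩)
          fun hgD => ⟨hg', fun _ => hgD⟩
      · exact .inl ⟨hg, fun h => absurd h hg'⟩
    · exact .inr ⟨(hC.mem_or_inv_mem g).resolve_left hg, fun h => absurd (inv_inv g ▸ h) hg⟩

theorem IsTotalSubmonoid.mem_of_minimal {S C D : Set G}
    (hC : Minimal (fun C => IsTotalSubmonoid C ∧ Disjoint S C) C) (hD : IsTotalSubmonoid D)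
    {a : G} (ha : a ∈ C) (ha' : a⁻¹ ∈ C) : a ∈ D := by
  have hsub : {g | g ∈ C ∧ (g⁻¹ ∈ C → g ∈ D)} ⊆ C := fun _ hg => hg.1
  exact (hC.2 ⟨hC.1.1.refine hD, hC.1.2.mono_right hsub⟩ hsub ha).2 ha'

theorem IsTotalSubmonoid.compl_mul_mem {C : Set G} (hC : IsTotalSubmonoid C)
    (hunits : ∀ a ∈ C, a⁻¹ ∈ C → a = 1) {a b : G} (ha : a ∉ C) (hb : b ∉ C) : a * b ∉ C := by
  intro hab
  have ha' : a⁻¹ ∈ C := (hC.mem_or_inv_mem a).resolve_left ha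
  have hb' : b⁻¹ ∈ C := (hC.mem_or_inv_mem b).resolve_left hb
  have hab' : (a * b)⁻¹ ∈ C := by simpa using hC.mul_mem hb' ha'
  exact ha (eq_inv_of_mul_eq_one_left (hunits _ hab hab') ▸ hb')

theorem IsTotalSubmonoid.compl_mem_or_inv_mem {C : Set G} (hunits : ∀ a ∈ C, a⁻¹ ∈ C → a = 1)
    {a : G} (ha : a ≠ 1) : a ∈ Cᶜ ∨ a⁻¹ ∈ Cᶜ := by
  by_contra! h
  exact ha (hunits a (not_not.mp h.1) (not_not.mp h.2))

end

theorem stmt11 {G : Type*} [Group G] {S : Set G} (hS : ¬ RightD S)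
    (hsingle : ∀ a : G, a ≠ 1 → ¬ RightD ({a} : Set G)) :
    ∃ P : Set G, S ⊆ P ∧ (∀ a ∈ P, ∀ b ∈ P, a * b ∈ P) ∧ (1 : G) ∉ P ∧
      (∀ a : G, a ≠ 1 → a ∈ P ∨ a⁻¹ ∈ P) := by
  obtain ⟨C, hC⟩ := exists_minimal_isTotalSubmonoid_disjoint hS
  have hunits : ∀ a ∈ C, a⁻¹ ∈ C → a = 1 := fun a ha ha' => by
    by_contra hne
    obtain ⟨D, hD, haD⟩ := exists_isTotalSubmonoid_disjoint (hsingle a hne)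
    exact Set.disjoint_singleton_left.mp haD (hD.mem_of_minimal hC ha ha')
  exact ⟨Cᶜ, hC.1.2.subset_compl_right, fun a ha b hb => hC.1.1.compl_mul_mem hunits ha hb,
    not_not.mpr hC.1.1.one_mem, fun a ha => IsTotalSubmonoid.compl_mem_or_inv_mem hunits ha⟩
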